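/- arXiv:1201.0874 — 2 statements merged into one kernel-verified Lean document; each statement's English description precedes it below -/
import Mathlib

section
/- In λ_S, the terms Sk.⟨t⟩ and Sk.t are applicatively bisimilar for every term t with fv(t) ⊆ {k}. -/
namespace LamS

/-- Terms of the λ-calculus with shift and reset, in de Bruijn representation.
    `lam` and `shift` bind variable 0. -/
inductive Tm : Type
  | var : ℕ → Tm
  | lam : Tm → Tm
  | app : Tm → Tm → Tm
  | shift : Tm → Tm
  | reset : Tm → Tm
  deriving DecidableEq

open Tm

/-- Lift (shift up) free de Bruijn indices `≥ c` by `d`. -/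
def liftT (d : ℕ) : ℕ → Tm → Tm
  | c, var n => if n < c then var n else var (n + d)
  | c, lam t => lam (liftT d (c+1) t)
  | c, app a b => app (liftT d c a) (liftT d c b)
  | c, shift t => shift (liftT d (c+1) t)
  | c, reset t => reset (liftT d c t)

/-- Capture-avoiding substitution `t[j := s]` (de Bruijn). -/
def substT : ℕ → Tm → Tm → Tm
  | j, s, var n => if n = j then liftT j 0 s else if j < n then var (n-1) else var n
  | j, s, lam t => lam (substT (j+1) s t)
  | j, s, app a b => app (substT j s a) (substT j s b)
  | j, s, shift t => shift (substT (j+1) s t)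
  | j, s, reset t => reset (substT j s t)

/-- Values are λ-abstractions. -/
def IsValue (t : Tm) : Prop := ∃ b, t = lam b

/-- All free variables are `< n`. -/
def ClosedUnder : ℕ → Tm → Prop
  | n, var m => m < n
  | n, lam t => ClosedUnder (n+1) t
  | n, app a b => ClosedUnder n a ∧ ClosedUnder n b
  | n, shift t => ClosedUnder (n+1) t
  | n, reset t => ClosedUnder n t

def Closed (t : Tm) : Prop := ClosedUnder 0 t

/-- Pure evaluation contexts, interpreted inside-out:
    `appV b E` is `E[(λ.b) []]` and `appL E t` is `E[[] t]`. -/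
inductive PCtx : Type
  | hole : PCtx
  | appV : Tm → PCtx → PCtx
  | appL : PCtx → Tm → PCtx
  deriving DecidableEq

def PCtx.plug : PCtx → Tm → Tm
  | .hole, t => t
  | .appV b E, t => E.plug (app (lam b) t)
  | .appL E s, t => E.plug (app t s)

def PCtx.liftC (d : ℕ) : ℕ → PCtx → PCtx
  | _, .hole => .hole
  | c, .appV b E => .appV (liftT d (c+1) b) (PCtx.liftC d c E)
  | c, .appL E s => .appL (PCtx.liftC d c E) (liftT d c s)

/-- Composition of pure contexts: `(E.comp E').plug t = E.plug (E'.plug t)`. -/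
def PCtx.comp : PCtx → PCtx → PCtx
  | E, .hole => E
  | E, .appV b E' => .appV b (E.comp E')
  | E, .appL E' s => .appL (E.comp E') s

/-- The captured delimited continuation `λx.⟨E[x]⟩`. -/
def contOf (E : PCtx) : Tm := lam (reset ((PCtx.liftC 1 0 E).plug (var 0)))

/-- Call-by-value evaluation contexts, interpreted inside-out. -/
inductive ECtx : Type
  | hole : ECtx
  | appV : Tm → ECtx → ECtx
  | appL : ECtx → Tm → ECtx
  | resetC : ECtx → ECtx
  deriving DecidableEq

def ECtx.plug : ECtx → Tm → Tm
  | .hole, t => t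
  | .appV b F, t => F.plug (app (lam b) t)
  | .appL F s, t => F.plug (app t s)
  | .resetC F, t => F.plug (reset t)

def ClosedECtx : ECtx → Prop
  | .hole => True
  | .appV b F => ClosedUnder 1 b ∧ ClosedECtx F
  | .appL F s => ClosedECtx F ∧ Closed s
  | .resetC F => ClosedECtx F

/-- One-step reduction of λ_S. -/
inductive Red : Tm → Tm → Prop
  | beta (F : ECtx) (t v : Tm) (hv : IsValue v) :
      Red (F.plug (app (lam t) v)) (F.plug (substT 0 v t))
  | cap (F : ECtx) (E : PCtx) (t : Tm) :
      Red (F.plug (reset (E.plug (shift t)))) (F.plug (reset (substT 0 (contOf E) t)))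
  | res (F : ECtx) (v : Tm) (hv : IsValue v) :
      Red (F.plug (reset v)) (F.plug v)

def RedStar : Tm → Tm → Prop := Relation.ReflTransGen Red

/-- A term is stuck if it is not a value and cannot reduce. -/
def Stuck (t : Tm) : Prop := ¬ IsValue t ∧ ∀ u, ¬ Red t u

/-- Evaluation: reduce to an irreducible term. -/
def Eval (t t' : Tm) : Prop := RedStar t t' ∧ ∀ u, ¬ Red t' u

def IsRedex (r : Tm) : Prop :=
  (∃ t v, IsValue v ∧ r = app (lam t) v) ∨
  (∃ E s, r = reset (PCtx.plug E (shift s))) ∨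
  (∃ v, IsValue v ∧ r = reset v)

/-- Labels of the LTS. -/
inductive Label : Type
  | tau : Label
  | val : Tm → Label
  | ctx : PCtx → Label

/-- The labelled transition system for λ_S. -/
inductive Step : Tm → Label → Tm → Prop
  | beta {t v : Tm} (hv : IsValue v) :
      Step (app (lam t) v) .tau (substT 0 v t)
  | resetVal {v : Tm} (hv : IsValue v) :
      Step (reset v) .tau v
  | appL {t0 t0' t1 : Tm} :
      Step t0 .tau t0' → Step (app t0 t1) .tau (app t0' t1)
  | appR {v t t' : Tm} (hv : IsValue v) :
      Step t .tau t' → Step (app v t) .tau (app v t')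
  | resetT {t t' : Tm} :
      Step t .tau t' → Step (reset t) .tau (reset t')
  | resetCap {t t' : Tm} :
      Step t (.ctx .hole) t' → Step (reset t) .tau t'
  | lamApp {t v : Tm} (hv : IsValue v) :
      Step (lam t) (.val v) (substT 0 v t)
  | shiftCap {t : Tm} (E : PCtx) :
      Step (shift t) (.ctx E) (reset (substT 0 (contOf E) t))
  | capL {t0 t0' t1 : Tm} {E : PCtx} :
      Step t0 (.ctx (.appL E t1)) t0' → Step (app t0 t1) (.ctx E) t0'
  | capR {b t t' : Tm} {E : PCtx} :
      Step t (.ctx (.appV b E)) t' → Step (app (lam b) t) (.ctx E) t'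

def TauStar : Tm → Tm → Prop := Relation.ReflTransGen (fun a b => Step a .tau b)

/-- Weak delay transition: τ-steps, then an `l`-step if `l ≠ τ`. -/
def Weak (t : Tm) (l : Label) (t' : Tm) : Prop :=
  match l with
  | .tau => TauStar t t'
  | _ => ∃ u, TauStar t u ∧ Step u l t'

/-- Applicative simulation. -/
def IsSim (R : Tm → Tm → Prop) : Prop :=
  ∀ ⦃t0 t1⦄, R t0 t1 → ∀ ⦃l t0'⦄, Step t0 l t0' →
    ∃ t1', Weak t1 l t1' ∧ R t0' t1'

def IsBisim (R : Tm → Tm → Prop) : Prop := IsSim R ∧ IsSim (flip R)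

/-- Applicative bisimilarity: the largest applicative bisimulation. -/
def Bisim (t0 t1 : Tm) : Prop := ∃ R, IsBisim R ∧ R t0 t1

/-- Big-step applicative simulation. -/
def IsBigSim (R : Tm → Tm → Prop) : Prop :=
  ∀ ⦃t0 t1⦄, R t0 t1 → ∀ ⦃l t0'⦄, l ≠ Label.tau → Weak t0 l t0' →
    ∃ t1', Weak t1 l t1' ∧ R t0' t1'

def IsBigBisim (R : Tm → Tm → Prop) : Prop := IsBigSim R ∧ IsBigSim (flip R)

/-- Big-step applicative bisimilarity. -/
def BigBisim (t0 t1 : Tm) : Prop := ∃ R, IsBigBisim R ∧ R t0 t1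

/-- General contexts. -/
inductive Ctx : Type
  | hole : Ctx
  | lam : Ctx → Ctx
  | appL : Ctx → Tm → Ctx
  | appR : Tm → Ctx → Ctx
  | shift : Ctx → Ctx
  | reset : Ctx → Ctx

/-- Plugging a term in a general context (free variables may be captured). -/
def Ctx.plug : Ctx → Tm → Tm
  | .hole, t => t
  | .lam C, t => Tm.lam (C.plug t)
  | .appL C s, t => Tm.app (C.plug t) s
  | .appR s C, t => Tm.app s (C.plug t)
  | .shift C, t => Tm.shift (C.plug t)
  | .reset C, t => Tm.reset (C.plug t)

def CtxClosedUnder : ℕ → Ctx → Prop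
  | _, .hole => True
  | n, .lam C => CtxClosedUnder (n+1) C
  | n, .appL C s => CtxClosedUnder n C ∧ ClosedUnder n s
  | n, .appR s C => ClosedUnder n s ∧ CtxClosedUnder n C
  | n, .shift C => CtxClosedUnder (n+1) C
  | n, .reset C => CtxClosedUnder n C

def ClosedCtx (C : Ctx) : Prop := CtxClosedUnder 0 C

def EvalsToValue (t : Tm) : Prop := ∃ v, IsValue v ∧ Eval t v

def EvalsToStuck (t : Tm) : Prop := ∃ s, Stuck s ∧ Eval t s

/-- Contextual equivalence on closed terms. -/
def CtxEquiv (t0 t1 : Tm) : Prop :=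
  ∀ C : Ctx, ClosedCtx C →
    (EvalsToValue (C.plug t0) ↔ EvalsToValue (C.plug t1)) ∧
    (EvalsToStuck (C.plug t0) ↔ EvalsToStuck (C.plug t1))

/-- Contextual equivalence restricted to evaluation contexts. -/
def ECtxEquiv (t0 t1 : Tm) : Prop :=
  ∀ F : ECtx, ClosedECtx F →
    (EvalsToValue (F.plug t0) ↔ EvalsToValue (F.plug t1)) ∧
    (EvalsToStuck (F.plug t0) ↔ EvalsToStuck (F.plug t1))

/-- Lifting a substitution under a binder. -/
def liftSub (σ : ℕ → Tm) : ℕ → Tm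
  | 0 => var 0
  | n+1 => liftT 1 0 (σ n)

/-- Apply a substitution to all free variables of a term. -/
def applySub (σ : ℕ → Tm) : Tm → Tm
  | var n => σ n
  | lam t => lam (applySub (liftSub σ) t)
  | app a b => app (applySub σ a) (applySub σ b)
  | shift t => shift (applySub (liftSub σ) t)
  | reset t => reset (applySub σ t)

/-- A closing substitution maps every variable to a closed value. -/
def ClosingSub (σ : ℕ → Tm) : Prop := ∀ n, IsValue (σ n) ∧ Closed (σ n)

/-- Open extension of a relation on closed terms. -/
def OpenExt (R : Tm → Tm → Prop) (t0 t1 : Tm) : Prop :=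
  ∀ σ, ClosingSub σ → R (applySub σ t0) (applySub σ t1)

/-- Howe's closure of applicative bisimilarity (compatible refinement rules inlined). -/
inductive Howe : Tm → Tm → Prop
  | base {t0 t1} : OpenExt Bisim t0 t1 → Howe t0 t1
  | right {t0 t2 t1} : Howe t0 t2 → OpenExt Bisim t2 t1 → Howe t0 t1
  | compVar (n : ℕ) : Howe (var n) (var n)
  | compLam {t0 t1} : Howe t0 t1 → Howe (lam t0) (lam t1)
  | compApp {a0 a1 b0 b1} : Howe a0 a1 → Howe b0 b1 → Howe (app a0 b0) (app a1 b1)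
  | compShift {t0 t1} : Howe t0 t1 → Howe (shift t0) (shift t1)
  | compReset {t0 t1} : Howe t0 t1 → Howe (reset t0) (reset t1)

/-- Howe's closure restricted to closed terms. -/
def HoweC (t0 t1 : Tm) : Prop := Closed t0 ∧ Closed t1 ∧ Howe t0 t1

/-- Extension of Howe's closure to pure contexts. -/
inductive PCtxHowe : PCtx → PCtx → Prop
  | hole : PCtxHowe .hole .hole
  | appV {b0 b1 E0 E1} : Howe b0 b1 → PCtxHowe E0 E1 → PCtxHowe (.appV b0 E0) (.appV b1 E1)
  | appL {E0 E1 t0 t1} : PCtxHowe E0 E1 → Howe t0 t1 → PCtxHowe (.appL E0 t0) (.appL E1 t1)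

/-- Extension of Howe's closure to labels. -/
def LabHowe : Label → Label → Prop
  | .tau, .tau => True
  | .val v0, .val v1 => Closed v0 ∧ Closed v1 ∧ Howe v0 v1
  | .ctx E0, .ctx E1 => PCtxHowe E0 E1
  | _, _ => False

/-- ω = λx. x x -/
def omegaTm : Tm := lam (app (var 0) (var 0))

/-- Ω = ω ω, the standard diverging term. -/
def OmegaTm : Tm := app omegaTm omegaTm

/-- Every τ-reachable term can do a τ-step: only infinite τ-sequences. -/
def Diverges (t : Tm) : Prop := ∀ u, TauStar t u → ∃ u', Step u .tau u'

/-- No weak non-τ transition. -/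
def NoObs (t : Tm) : Prop := ∀ l t', l ≠ Label.tau → ¬ Weak t l t'

/-! The relation `{(Sk.⟨t⟩, Sk.t)} ∪ {(⟨⟨s⟩⟩, ⟨s⟩)} ∪ id` is already a small-step bisimulation.
A capture by `Sk.⟨t⟩` or by `Sk.t` leads to `⟨⟨t'⟩⟩` resp. `⟨t'⟩`. In a pair `(⟨⟨s⟩⟩, ⟨s⟩)` the
outer reset is inert: `⟨s⟩` never performs a capture, and the target of every capture is again a
reset, so the pair keeps its shape until `⟨s⟩` returns a value `v`, which `⟨⟨s⟩⟩` reaches by one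
extra τ-step. -/

inductive ShiftResetRel : Tm → Tm → Prop
  | shift_reset (t : Tm) : ShiftResetRel (shift (reset t)) (shift t)
  | reset_reset (s : Tm) : ShiftResetRel (reset (reset s)) (reset s)
  | refl (t : Tm) : ShiftResetRel t t

theorem Step.weak {t t' : Tm} {l : Label} (h : Step t l t') : Weak t l t' := by
  cases l with
  | tau => exact .single h
  | val v => exact ⟨t, .refl, h⟩
  | ctx E => exact ⟨t, .refl, h⟩

theorem Step.exists_eq_reset_of_ctx {t t' : Tm} {E : PCtx} (h : Step t (.ctx E) t') :
    ∃ w, t' = reset w := by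
  generalize hl : Label.ctx E = l at h
  induction h generalizing E with
  | shiftCap => exact ⟨_, rfl⟩
  | capL _ ih => exact ih rfl
  | capR _ ih => exact ih rfl
  | _ => cases hl

theorem Step.shift_reset {t : Tm} (E : PCtx) :
    Step (shift (reset t)) (.ctx E) (reset (reset (substT 0 (contOf E) t))) :=
  Step.shiftCap (t := reset t) E

theorem isSim_shiftResetRel : IsSim ShiftResetRel := by
  intro t0 t1 hR l t0' hstep
  cases hR with
  | refl => exact ⟨t0', hstep.weak, .refl _⟩
  | shift_reset t =>
    cases hstep with
    | shiftCap E => exact ⟨_, (Step.shiftCap E).weak, .reset_reset _⟩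
  | reset_reset s =>
    cases hstep with
    | resetVal hv => obtain ⟨_, ⟨⟩⟩ := hv
    | resetT h =>
      cases h with
      | resetVal => exact ⟨reset s, .refl, .refl _⟩
      | resetT h => exact ⟨_, (Step.resetT h).weak, .reset_reset _⟩
      | resetCap h =>
        obtain ⟨w, rfl⟩ := h.exists_eq_reset_of_ctx
        exact ⟨_, (Step.resetCap h).weak, .reset_reset w⟩
    | resetCap h => cases h

theorem isSim_flip_shiftResetRel : IsSim (flip ShiftResetRel) := by
  intro t0 t1 hR l t0' hstep
  cases hR with
  | refl => exact ⟨t0', hstep.weak, .refl _⟩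
  | shift_reset t =>
    cases hstep with
    | shiftCap E => exact ⟨_, (Step.shift_reset E).weak, .reset_reset _⟩
  | reset_reset s =>
    cases hstep with
    | resetVal hv =>
      exact ⟨t0', .tail (.single (.resetT (.resetVal hv))) (.resetVal hv), .refl _⟩
    | resetT h => exact ⟨_, (Step.resetT (.resetT h)).weak, .reset_reset _⟩
    | resetCap h =>
      obtain ⟨w, rfl⟩ := h.exists_eq_reset_of_ctx
      exact ⟨_, (Step.resetT (.resetCap h)).weak, .reset_reset w⟩

end LamS
open LamS LamS.Tm in
/-- Sk.⟨t⟩ ≈ Sk.t (k is de Bruijn variable 0 in t). -/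
theorem shift_reset_bisim :
    ∀ t : Tm, ClosedUnder 1 t → Bisim (shift (reset t)) (shift t) :=
  fun t _ => ⟨ShiftResetRel, ⟨isSim_shiftResetRel, isSim_flip_shiftResetRel⟩, .shift_reset t⟩
end

section
/- In λ_S, a stuck term is never bisimilar to a value; in particular Sk.(k v) is not applicatively bisimilar to v, for any closed value v. -/
/-!
A value `λ.b` performs the transition labelled by any closed value. A stuck term cannot
answer it: its τ-transitions would be reductions, so it has none, and only abstractions
perform value-labelled transitions. The term `Sk.(k v)` is stuck because a `shift` outside
any `reset` is not the decomposition of a redex in an evaluation context.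
-/

namespace LamS

open Tm

theorem PCtx.plug_comp (E E' : PCtx) (t : Tm) : (E.comp E').plug t = E.plug (E'.plug t) := by
  induction E' generalizing t <;> simp [PCtx.comp, PCtx.plug, *]

theorem PCtx.hole_comp (E : PCtx) : PCtx.hole.comp E = E := by
  induction E <;> simp [PCtx.comp, *]

theorem PCtx.comp_assoc (E A B : PCtx) : (E.comp A).comp B = E.comp (A.comp B) := by
  induction B <;> simp [PCtx.comp, *]

theorem Step.exists_plug_shift_of_ctx {t t' : Tm} {E : PCtx} (h : Step t (.ctx E) t') :
    ∃ E₀ s, t = E₀.plug (shift s) ∧ t' = reset (substT 0 (contOf (E.comp E₀)) s) := by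
  generalize hl : Label.ctx E = l at h
  induction h generalizing E with
  | shiftCap E' =>
    cases hl
    exact ⟨.hole, _, rfl, rfl⟩
  | @capL t₀ _ t₁ _ _ ih =>
    cases hl
    obtain ⟨E₀, s, rfl, rfl⟩ := ih rfl
    refine ⟨(PCtx.appL .hole t₁).comp E₀, s, ?_, ?_⟩
    · rw [PCtx.plug_comp]; rfl
    · rw [← PCtx.comp_assoc]; rfl
  | @capR b _ _ _ _ ih =>
    cases hl
    obtain ⟨E₀, s, rfl, rfl⟩ := ih rfl
    refine ⟨(PCtx.appV b .hole).comp E₀, s, ?_, ?_⟩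
    · rw [PCtx.plug_comp]; rfl
    · rw [← PCtx.comp_assoc]; rfl
  | _ => cases hl

theorem Step.red_of_tau {t t' : Tm} (h : Step t .tau t') (F : ECtx) :
    Red (F.plug t) (F.plug t') := by
  generalize hl : Label.tau = l at h
  induction h generalizing F with
  | beta hv => exact .beta F _ _ hv
  | resetVal hv => exact .res F _ hv
  | @appL _ _ t₁ _ ih => exact ih (.appL F t₁) hl
  | appR hv _ ih =>
    obtain ⟨b, rfl⟩ := hv
    exact ih (.appV b F) hl
  | resetT _ ih => exact ih (.resetC F) hl
  | resetCap h =>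
    obtain ⟨E₀, s, rfl, rfl⟩ := h.exists_plug_shift_of_ctx
    rw [PCtx.hole_comp]
    exact .cap F E₀ s
  | _ => cases hl

theorem Step.isValue_of_val {t w t' : Tm} (h : Step t (.val w) t') : IsValue t := by
  cases h
  exact ⟨_, rfl⟩

theorem Stuck.tauStar_eq {t u : Tm} (hst : Stuck t) (h : TauStar t u) : u = t := by
  rcases h.cases_head with rfl | ⟨c, hc, -⟩
  · rfl
  · exact (hst.2 c (hc.red_of_tau .hole)).elim

theorem Stuck.not_weak_val {t w t' : Tm} (hst : Stuck t) : ¬ Weak t (.val w) t' := by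
  rintro ⟨u, htu, hu⟩
  obtain rfl := hst.tauStar_eq htu
  exact hst.1 hu.isValue_of_val

theorem Stuck.not_bisim {t v : Tm} (hst : Stuck t) (hv : IsValue v) : ¬ Bisim t v := by
  rintro ⟨R, ⟨-, hsim⟩, hR⟩
  obtain ⟨b, rfl⟩ := hv
  obtain ⟨t', hweak, -⟩ := hsim hR (Step.lamApp (t := b) (v := lam (var 0)) ⟨_, rfl⟩)
  exact hst.not_weak_val hweak

theorem ECtx.eq_of_plug_eq_shift {F : ECtx} {t s : Tm} (h : F.plug t = shift s) :
    t = shift s := by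
  induction F generalizing t with
  | hole => exact h
  | appV _ _ ih => cases ih h
  | appL _ _ ih => cases ih h
  | resetC _ ih => cases ih h

theorem stuck_shift (s : Tm) : Stuck (shift s) := by
  refine ⟨fun ⟨_, h⟩ => Tm.noConfusion h, fun u h => ?_⟩
  generalize hs : shift s = t at h
  cases h <;> cases ECtx.eq_of_plug_eq_shift hs.symm

end LamS

open LamS LamS.Tm in
/-- a stuck term is never bisimilar to a value; in particular
    Sk.(k v) is not bisimilar to v. -/
theorem stuck_not_bisim_value :
    (∀ t v : Tm, Closed t → Stuck t → Closed v → IsValue v → ¬ Bisim t v) ∧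
    (∀ v : Tm, Closed v → IsValue v →
      ¬ Bisim (shift (app (var 0) (liftT 1 0 v))) v) :=
  ⟨fun _ _ _ hst _ hv => hst.not_bisim hv,
   fun _ _ hv => (stuck_shift _).not_bisim hv⟩
end
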